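/- Let a := 28^{1/4}, and define p_a := ((a + 1)² + 1)/2, m_a² := (1/2)(a³ + 4a² + 10a + 14), and r_a(ξ) := ξ³ + 2ξ²(1 + 3p_a − m_a²) + ξ·p_a²(p_a + 4) − p_a⁴. Then r_a factors as r_a(ξ) = (ξ − α)(ξ − β)(ξ − γ), where α = (2/a²)·{a³ + a² + 4a + 2 + (2a − a³ + 12)·cos(π/7) + (a³ − 2a − 4)·cos(2π/7)}, β = (2/a²)·{a³/2 + a² + 5a + 8 − 8·cos(π/7) + (2a − a³ + 12)·cos(2π/7)}, and γ = (2/a²)·{a³/2 + a² + 5a + 4 + (a³ − 2a − 4)·cos(π/7) − 8·cos(2π/7)}. -/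

import Mathlib

/-!
Put `c = cos (π / 7)`, so that `cos (2π / 7) = 2c² - 1` and `c` is a root of
`8X³ - 4X² - 4X + 1`. The three brackets in `α, β, γ` are the conjugates of
`a³ + a² + 4a + 2 + (2a - a³ + 12) c + (a³ - 2a - 4) cos (2π / 7)` under the cyclic Galois group
of `ℚ(c)`, so `a²α/2, a²β/2, a²γ/2` are the roots of a characteristic polynomial whose
coefficients are polynomials in `a`. Modulo `a⁴ = 28` these match the coefficients of `r_a`.
-/

open Real

lemma cos_pi_div_seven_cubic :
    8 * cos (π / 7) ^ 3 - 4 * cos (π / 7) ^ 2 - 4 * cos (π / 7) + 1 = 0 := by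
  set c := cos (π / 7)
  have hc_pos : 0 < c := cos_pos_of_mem_Ioo ⟨by linarith [pi_pos], by linarith [pi_pos]⟩
  have h : cos (2 * (2 * (π / 7))) = -cos (3 * (π / 7)) := by
    rw [← cos_pi_sub]; ring_nf
  rw [cos_two_mul, cos_two_mul, cos_three_mul] at h
  have : (c + 1) * (8 * c ^ 3 - 4 * c ^ 2 - 4 * c + 1) = 0 := by linear_combination h
  exact (mul_eq_zero.mp this).resolve_left (by positivity)

/- The map `c ↦ 2c² - c - 1/2` permutes the roots of `8X³ - 4X² - 4X + 1` cyclically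
(`cos (π/7) ↦ cos (3π/7) ↦ cos (5π/7)`) and sends `d = 2c² - 1` to `-c`; the three factors are
`P + Q c + R d` and its two images under it. -/
lemma prod_sub_conjugates_eq_charpoly {K : Type*} [Field K] [CharZero K] (P Q R c d T : K)
    (hc : 8 * c ^ 3 - 4 * c ^ 2 - 4 * c + 1 = 0) (hd : d = 2 * c ^ 2 - 1) :
    (T - (P + Q * c + R * d)) * (T - (P + Q / 2 - (Q + R) * c + Q * d)) *
        (T - (P - R / 2 + R * c - (Q + R) * d)) =
      T ^ 3 - (3 * P + (Q - R) / 2) * T ^ 2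
        + (3 * P ^ 2 + P * (Q - R) - (2 * Q ^ 2 + 3 * Q * R + 2 * R ^ 2) / 4) * T
        - (P ^ 3 + P ^ 2 * (Q - R) / 2 - P * (2 * Q ^ 2 + 3 * Q * R + 2 * R ^ 2) / 4
            - (Q ^ 3 - 3 * Q ^ 2 * R - 4 * Q * R ^ 2 - R ^ 3) / 8) := by
  subst hd
  linear_combination (-(T - P) * c * (Q ^ 2 + Q * R + R ^ 2) / 2
    + Q ^ 3 * (4 * c ^ 2 - 1) / 8 + Q ^ 2 * R * (8 * c ^ 3 + 4 * c ^ 2 - 10 * c - 1) / 8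
    + Q * R ^ 2 * (4 * c ^ 3 - 4 * c ^ 2 - 4 * c + 1) / 4 - R ^ 3 * (4 * c ^ 2 - 1) / 8) * hc

theorem cubic_factorization (a pa ma2 α β γ : ℝ)
    (ha : a = (28 : ℝ) ^ ((1 : ℝ) / 4))
    (hpa : pa = ((a + 1) ^ 2 + 1) / 2)
    (hma2 : ma2 = 1 / 2 * (a ^ 3 + 4 * a ^ 2 + 10 * a + 14))
    (hα : α = 2 / a ^ 2 *
      (a ^ 3 + a ^ 2 + 4 * a + 2 + (2 * a - a ^ 3 + 12) * Real.cos (π / 7) +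
        (a ^ 3 - 2 * a - 4) * Real.cos (2 * π / 7)))
    (hβ : β = 2 / a ^ 2 *
      (a ^ 3 / 2 + a ^ 2 + 5 * a + 8 - 8 * Real.cos (π / 7) +
        (2 * a - a ^ 3 + 12) * Real.cos (2 * π / 7)))
    (hγ : γ = 2 / a ^ 2 *
      (a ^ 3 / 2 + a ^ 2 + 5 * a + 4 + (a ^ 3 - 2 * a - 4) * Real.cos (π / 7) -
        8 * Real.cos (2 * π / 7))) :
    ∀ ξ : ℝ, ξ ^ 3 + 2 * ξ ^ 2 * (1 + 3 * pa - ma2) + ξ * pa ^ 2 * (pa + 4) - pa ^ 4 =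
      (ξ - α) * (ξ - β) * (ξ - γ) := by
  have ha4 : a ^ 4 = 28 := by
    rw [ha, one_div]; exact rpow_inv_natCast_pow (by norm_num) (by norm_num)
  have ha0 : a ≠ 0 := by rintro rfl; norm_num at ha4
  intro ξ
  have hconj := prod_sub_conjugates_eq_charpoly (a ^ 3 + a ^ 2 + 4 * a + 2)
    (2 * a - a ^ 3 + 12) (a ^ 3 - 2 * a - 4) (cos (π / 7)) (cos (2 * π / 7)) (a ^ 2 * ξ / 2)
    cos_pi_div_seven_cubic (by rw [← cos_two_mul, mul_div_assoc])
  rw [hα, hβ, hγ, hpa, hma2]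
  field_simp
  linear_combination (-128) * hconj + (-16 * a ^ 4 * (a + 1) * ξ ^ 2
    + (2 * a ^ 8 + 12 * a ^ 7 + 52 * a ^ 6 + 128 * a ^ 5 + 208 * a ^ 4 + 256 * a ^ 3) * ξ
    - (a ^ 10 + 8 * a ^ 9 + 32 * a ^ 8 + 80 * a ^ 7 + 164 * a ^ 6 + 400 * a ^ 5 + 928 * a ^ 4
      + 1376 * a ^ 3 + 896 * a ^ 2 - 896 * a - 1792)) * ha4
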